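/- Fix a k-anxious root of unity α, let m be the smallest positive integer such that α^{k^m} = α, and let 𝒜 be the disjoint union of the sets A_{α^{k^i}} for 0 ≤ i ≤ m−1. Let (c_1,…,c_m) be a sequence of rational functions of length exactly m (possibly containing zero terms). If clm_{(a_i)}(c_i) ≥ 0 for every (a_i) ∈ 𝒜, then there exists a nonzero polynomial h ∈ K[z] such that the sequence h*(c_i) is α^{k^i}-calm for every i ≥ 0, i.e. no term of h*(c_i) has a pole at any α^{k^i}. -/

import Mathlib

open Polynomial

attribute [local instance] Classical.propDecidable

noncomputable section

variable {K : Type*} [Field K]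

/-- Integer order of vanishing of a rational function at `α` (junk value `0` for `c = 0`). -/
def vInt (α : K) (c : RatFunc K) : ℤ :=
  (c.num.rootMultiplicity α : ℤ) - (c.denom.rootMultiplicity α : ℤ)

/-- The `(z - α)`-adic valuation on `K(z)`, with `vAt α 0 = ⊤`. -/
def vAt (α : K) (c : RatFunc K) : WithTop ℤ :=
  if c = 0 then ⊤ else (vInt α c : WithTop ℤ)

/-- Substitution `z ↦ z^i` in a rational function. -/
def substPow (i : ℕ) (c : RatFunc K) : RatFunc K :=
  RatFunc.eval (algebraMap K (RatFunc K)) (RatFunc.X ^ i) c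

/-- A polynomial viewed as a rational function. -/
def toRat (p : Polynomial K) : RatFunc K := algebraMap (Polynomial K) (RatFunc K) p

/-- A rational function is a polynomial. -/
def IsPolyFun (c : RatFunc K) : Prop := ∃ p : Polynomial K, c = toRat p

def IsRootOfUnity (α : K) : Prop := ∃ m : ℕ, 0 < m ∧ α ^ m = 1

/-- `α` is `k`-calm: zero, or a root of unity whose order is not coprime to `k`. -/
def IsCalmNum (k : ℕ) (α : K) : Prop :=
  α = 0 ∨ (0 < orderOf α ∧ ¬ Nat.Coprime (orderOf α) k)

def IsAnxious (k : ℕ) (α : K) : Prop := ¬ IsCalmNum k α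

/-- A rational function is `k`-calm: no poles at `k`-anxious numbers. -/
def IsCalmFun (k : ℕ) (c : RatFunc K) : Prop :=
  ∀ α : K, IsAnxious k α → 0 ≤ vAt α c

/-- Action of a rational function `h` on a finite sequence `(c_1, …, c_n)`;
the index `i : Fin n` stands for the 1-based index `i+1`. -/
def act (k : ℕ) (h : RatFunc K) {n : ℕ} (c : Fin n → RatFunc K) : Fin n → RatFunc K :=
  fun i => substPow (k ^ (i.1 + 1)) h / h * c i

def IsPrecalmSeq (k : ℕ) {n : ℕ} (c : Fin n → RatFunc K) : Prop :=
  ∃ h : Polynomial K, h ≠ 0 ∧ ∀ i, IsCalmFun k (act k (toRat h) c i)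

/-- Partial sums `ā_i = a_0 + … + a_{i-1}` of an infinite sequence with values in `{1,…,n}`. -/
def abarInf {n : ℕ} (a : ℕ → Fin n) (i : ℕ) : ℕ :=
  ∑ j ∈ Finset.range i, ((a j).1 + 1)

/-- Partial sums for a finite sequence (a list). -/
def abarList {n : ℕ} (l : List (Fin n)) (i : ℕ) : ℕ :=
  ((l.take i).map (fun j => j.1 + 1)).sum

/-- Full sum `ā_μ` of a finite sequence. -/
def barSum {n : ℕ} (l : List (Fin n)) : ℕ := (l.map (fun j => j.1 + 1)).sum

/-- Calmness w.r.t. an anxious `α` that is not a root of unity and an infinite sequence. -/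
def clmInf (k : ℕ) (α : K) {n : ℕ} (c : Fin n → RatFunc K) (a : ℕ → Fin n) : WithTop ℤ :=
  if ∃ i, c (a i) = 0 then ⊤
  else ((∑ᶠ i : ℕ, vInt (α ^ k ^ abarInf a i) (c (a i)) : ℤ) : WithTop ℤ)

/-- Calmness w.r.t. an anxious root of unity `α` and a finite sequence. -/
def clmList (k : ℕ) (α : K) {n : ℕ} (c : Fin n → RatFunc K) (l : List (Fin n)) : WithTop ℤ :=
  ∑ i : Fin l.length, vAt (α ^ k ^ abarList l i.1) (c (l.get i))

/-- Calmness of a single rational function w.r.t. an anxious `α`. -/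
def clmOne (k : ℕ) (α : K) (c : RatFunc K) : WithTop ℤ :=
  if hμ : ∃ μ : ℕ, 0 < μ ∧ α ^ k ^ μ = α then
    ∑ i ∈ Finset.range (Nat.find hμ), vAt (α ^ k ^ i) c
  else if c = 0 then ⊤
  else ((∑ᶠ i : ℕ, vInt (α ^ k ^ i) c : ℤ) : WithTop ℤ)

/-- The `k`-kernel of a sequence. -/
def kernelSet (k : ℕ) (a : ℕ → K) : Set (ℕ → K) :=
  { b | ∃ e r : ℕ, r < k ^ e ∧ b = fun i => a (k ^ e * i + r) }

/-- `k`-regularity of a formal power series. -/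
def IsRegularSeries (k : ℕ) (f : PowerSeries K) : Prop :=
  FiniteDimensional K (Submodule.span K (kernelSet k (fun i => PowerSeries.coeff i f)))

/-- Cartier operator `Λ_{k,r}`. -/
def cartier (k r : ℕ) (f : PowerSeries K) : PowerSeries K :=
  PowerSeries.mk fun i => PowerSeries.coeff (k * i + r) f

/-- Substitution `z ↦ z^m` in a power series (for `m ≥ 1`). -/
def psSubstPow (m : ℕ) (f : PowerSeries K) : PowerSeries K :=
  PowerSeries.mk fun i => if m ∣ i then PowerSeries.coeff (i / m) f else 0

/-- `f` satisfies the Mahler equation `f(z) = Σ_{i=1}^n c_i(z) f(z^{k^i})`. -/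
def SatisfiesMahler (k : ℕ) {n : ℕ} (c : Fin n → RatFunc K) (f : PowerSeries K) : Prop :=
  ∃ (q : Polynomial K) (p : Fin n → Polynomial K), q ≠ 0 ∧
    (∀ i, toRat q * c i = toRat (p i)) ∧
    (q : PowerSeries K) * f = ∑ i : Fin n, ((p i : PowerSeries K) * psSubstPow (k ^ (i.1 + 1)) f)


/-- Substitution `z ↦ z^m` in a formal Laurent series (for `m ≥ 1`). -/
def lsSubstPow (m : ℕ) (g : LaurentSeries K) : LaurentSeries K :=
  if h : 0 < m then
    HahnSeries.embDomain
      (OrderEmbedding.ofStrictMono (fun n : ℤ => (m : ℤ) * n)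
        (fun a b hab => by
          exact mul_lt_mul_of_pos_left hab (by exact_mod_cast h))) g
  else 0

/-- A Laurent series `g` satisfies the Mahler equation `g(z) = Σ_{i=1}^n b_i(z) g(z^{k^i})`
with polynomial coefficients. -/
def SatisfiesMahlerPolyLS (k : ℕ) {n : ℕ} (b : Fin n → Polynomial K) (g : LaurentSeries K) : Prop :=
  g = ∑ i : Fin n, (((b i : PowerSeries K) : LaurentSeries K) * lsSubstPow (k ^ (i.1 + 1)) g)

/-- Coefficients `d_{i,m}` of the special operators associated to `(c_1, …, c_n)`:
`dCoef k c m i` is `d_{i,m}`, with value `0` outside the range `1 ≤ i ≤ m + n`. -/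
def dCoef (k : ℕ) {n : ℕ} (c : Fin n → RatFunc K) : ℕ → ℕ → RatFunc K
  | 0 => fun i => if h : 1 ≤ i ∧ i ≤ n then c ⟨i - 1, by omega⟩ else 0
  | m + 1 => fun i =>
      if _h1 : i ≤ m then dCoef k c m i
      else if _h2 : i = m + 1 then 0
      else if h3 : i ≤ m + 1 + n then
        dCoef k c m i + dCoef k c m (m + 1) * substPow (k ^ (m + 1)) (c ⟨i - m - 2, by omega⟩)
      else 0

end

/-!
Regard the orbit `α, α^k, …, α^(k^(m-1))` as a weighted digraph: from `β`, the edge labelled `a`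
leads to `β^(k^(a+1))` and has weight `v_β(c_a)`. The hypothesis says that no cycle has negative
weight, so every walk can be shortened, without increasing its weight, to one of length less than
the size of the orbit. Hence the least weight `-E β` of a walk ending at `β` is finite, and it
satisfies the triangle inequality `E β ≤ E (β^(k^(a+1))) + v_β(c_a)`. For
`h = ∏ (z - β)^(E β)` over the orbit, the valuation of `h(z^(k^(a+1)))/h(z) · c_a` at `β` is at
least `E (β^(k^(a+1))) - E β + v_β(c_a) ≥ 0`.
-/

lemma Polynomial.rootMultiplicity_le_rootMultiplicity_expand {R : Type*} [CommRing R] [IsDomain R]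
    (β : R) {e : ℕ} (he : e ≠ 0) {p : R[X]} (hp : p ≠ 0) :
    p.rootMultiplicity (β ^ e) ≤ (expand R e p).rootMultiplicity β := by
  have hdvd : X - C β ∣ expand R e (X - C (β ^ e)) := by simp [dvd_iff_isRoot]
  rw [le_rootMultiplicity_iff ((expand_ne_zero (Nat.pos_of_ne_zero he)).mpr hp)]
  exact (pow_dvd_pow_of_dvd hdvd _).trans
    (by simpa only [map_pow] using
      _root_.map_dvd (expand R e) (pow_rootMultiplicity_dvd p (β ^ e)))

lemma Polynomial.exists_rootMultiplicity_eq {R : Type*} [CommRing R] [IsDomain R]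
    (s : Finset R) (E : R → ℕ) :
    ∃ h : R[X], h ≠ 0 ∧ ∀ β ∈ s, h.rootMultiplicity β = E β := by
  classical
  set h := ∏ γ ∈ s, (X - C γ) ^ E γ
  have hh : h ≠ 0 := Finset.prod_ne_zero_iff.mpr fun γ _ => pow_ne_zero _ (X_sub_C_ne_zero γ)
  refine ⟨h, hh, fun β hβ => ?_⟩
  rw [← count_roots, roots_prod _ _ hh]
  simp [Multiset.count_bind, roots_pow, Multiset.count_singleton, hβ]

section Valuation

variable {K : Type*} [Field K]

lemma toRat_ne_zero {p : K[X]} (hp : p ≠ 0) : toRat p ≠ 0 :=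
  RatFunc.algebraMap_ne_zero hp

lemma vInt_mul (β : K) {f g : RatFunc K} (hf : f ≠ 0) (hg : g ≠ 0) :
    vInt β (f * g) = vInt β f + vInt β g := by
  have hfg := congrArg (rootMultiplicity β) (RatFunc.num_denom_mul f g)
  have hnum := RatFunc.num_ne_zero (mul_ne_zero hf hg)
  rw [rootMultiplicity_mul, rootMultiplicity_mul, rootMultiplicity_mul, rootMultiplicity_mul]
    at hfg
  · unfold vInt
    omega
  all_goals simp [hnum, hf, hg, RatFunc.denom_ne_zero]

lemma vAt_mul (β : K) (f g : RatFunc K) : vAt β (f * g) = vAt β f + vAt β g := by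
  by_cases hf : f = 0
  · simp [vAt, hf]
  by_cases hg : g = 0
  · simp [vAt, hg]
  simp only [vAt, mul_ne_zero hf hg, hf, hg, if_false, vInt_mul β hf hg, WithTop.coe_add]

lemma vAt_toRat (β : K) {p : K[X]} (hp : p ≠ 0) :
    vAt β (toRat p) = (p.rootMultiplicity β : ℤ) := by
  simp [vAt, vInt, toRat, hp, RatFunc.num_algebraMap, RatFunc.denom_algebraMap,
    rootMultiplicity_eq_zero (p := 1) (x := β) (by simp)]

lemma substPow_toRat (e : ℕ) (p : K[X]) : substPow e (toRat p) = toRat (expand K e p) := by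
  unfold substPow toRat
  rw [RatFunc.eval_algebraMap, expand_eq_comp_X_pow, comp, hom_eval₂]
  congr 1
  simp

lemma vAt_act_nonneg {k : ℕ} (hk : k ≠ 0) {n : ℕ} (c : Fin n → RatFunc K) (i : Fin n)
    {h : K[X]} (hh : h ≠ 0) (β : K)
    (hle : ((h.rootMultiplicity β : ℤ) : WithTop ℤ) ≤
      ((h.rootMultiplicity (β ^ k ^ (i.1 + 1)) : ℤ) : WithTop ℤ) + vAt β (c i)) :
    0 ≤ vAt β (act k (toRat h) c i) := by
  set e := k ^ (i.1 + 1)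
  have he : e ≠ 0 := pow_ne_zero _ hk
  have hact : act k (toRat h) c i * toRat h = toRat (expand K e h) * c i := by
    rw [act, substPow_toRat, div_mul_eq_mul_div, div_mul_cancel₀ _ (toRat_ne_zero hh)]
  have hval := congrArg (vAt β) hact
  rw [vAt_mul, vAt_mul, vAt_toRat β hh,
    vAt_toRat β ((expand_ne_zero (Nat.pos_of_ne_zero he)).mpr hh)] at hval
  have hexp : ((h.rootMultiplicity (β ^ e) : ℤ) : WithTop ℤ) ≤
      ((expand K e h).rootMultiplicity β : ℤ) := by
    exact_mod_cast rootMultiplicity_le_rootMultiplicity_expand β he hh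
  rw [← WithTop.add_le_add_iff_right (WithTop.coe_ne_top (a := (h.rootMultiplicity β : ℤ))),
    zero_add, hval]
  exact hle.trans (add_le_add_left hexp _)

end Valuation

section Potential

variable {V ι : Type*} (next : V → ι → V) (w : V → ι → WithTop ℤ)

def walkEnd (v : V) (l : List ι) : V := l.foldl next v

def walkWeight : V → List ι → WithTop ℤ
  | _, [] => 0
  | v, a :: l => w v a + walkWeight (next v a) l

lemma walkEnd_append (v : V) (l₁ l₂ : List ι) :
    walkEnd next v (l₁ ++ l₂) = walkEnd next (walkEnd next v l₁) l₂ :=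
  List.foldl_append

lemma walkWeight_append (v : V) (l₁ l₂ : List ι) :
    walkWeight next w v (l₁ ++ l₂) =
      walkWeight next w v l₁ + walkWeight next w (walkEnd next v l₁) l₂ := by
  induction l₁ generalizing v with
  | nil => simp [walkWeight, walkEnd]
  | cons a l ih => simp only [List.cons_append, walkWeight, ih, add_assoc]; rfl

variable {next} {S : Finset V}

lemma walkEnd_mem (hS : ∀ v ∈ S, ∀ a, next v a ∈ S) {v : V} (hv : v ∈ S) (l : List ι) :
    walkEnd next v l ∈ S := by
  induction l generalizing v with
  | nil => exact hv
  | cons a l ih => exact ih (hS v hv a)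

lemma exists_cycle_of_card_le_length (hS : ∀ v ∈ S, ∀ a, next v a ∈ S) {v : V} (hv : v ∈ S)
    {l : List ι} (hl : S.card ≤ l.length) :
    ∃ p q r : List ι, l = p ++ q ++ r ∧ q ≠ [] ∧
      walkEnd next (walkEnd next v p) q = walkEnd next v p := by
  obtain ⟨i, hi, j, hj, hij, heq⟩ := Finset.exists_ne_map_eq_of_card_lt_of_maps_to
    (s := Finset.range (S.card + 1)) (f := fun i => walkEnd next v (l.take i)) (by simp)
    (fun i _ => walkEnd_mem hS hv _)
  wlog hlt : i < j generalizing i j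
  · exact this j hj i hi hij.symm heq.symm (by omega)
  have hj' : j ≤ l.length := by simp at hj; omega
  refine ⟨l.take i, (l.drop i).take (j - i), l.drop j, ?_, ?_, ?_⟩
  · rw [← List.take_add, Nat.add_sub_cancel' hlt.le, List.take_append_drop]
  · simp only [ne_eq, List.take_eq_nil_iff, List.drop_eq_nil_iff]
    omega
  · rw [← walkEnd_append, ← List.take_add, Nat.add_sub_cancel' hlt.le]
    exact heq.symm

lemma exists_short_walk_le (hS : ∀ v ∈ S, ∀ a, next v a ∈ S)
    (hcyc : ∀ v ∈ S, ∀ l, walkEnd next v l = v → 0 ≤ walkWeight next w v l)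
    {v : V} (hv : v ∈ S) (l : List ι) :
    ∃ l' : List ι, l'.length < S.card ∧ walkEnd next v l' = walkEnd next v l ∧
      walkWeight next w v l' ≤ walkWeight next w v l := by
  induction h : l.length using Nat.strong_induction_on generalizing l with
  | _ n ih =>
  by_cases hl : l.length < S.card
  · exact ⟨l, hl, rfl, le_rfl⟩
  obtain ⟨p, q, r, rfl, hq, hcycle⟩ := exists_cycle_of_card_le_length hS hv (not_lt.mp hl)
  have hlen : (p ++ r).length < n := by
    have := List.length_pos_iff.mpr hq
    simp only [List.length_append] at h ⊢
    omega
  obtain ⟨l', hl', hend, hweight⟩ := ih _ hlen (p ++ r) rfl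
  refine ⟨l', hl', ?_, hweight.trans ?_⟩
  · rw [hend, walkEnd_append, walkEnd_append, walkEnd_append, hcycle]
  · rw [walkWeight_append, walkWeight_append, walkWeight_append, walkEnd_append, hcycle,
      add_assoc]
    exact add_le_add_right (le_add_of_nonneg_left (hcyc _ (walkEnd_mem hS hv p) q hcycle)) _

theorem exists_potential [Finite ι] (hS : ∀ v ∈ S, ∀ a, next v a ∈ S)
    (hcyc : ∀ v ∈ S, ∀ l, walkEnd next v l = v → 0 ≤ walkWeight next w v l) :
    ∃ E : V → ℕ, ∀ v ∈ S, ∀ a,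
      ((E v : ℤ) : WithTop ℤ) ≤ ((E (next v a) : ℤ) : WithTop ℤ) + w v a := by
  set T : V → Set (V × List ι) :=
    fun v => {x | x.1 ∈ S ∧ x.2.length < S.card ∧ walkEnd next x.1 x.2 = v}
  have hfin : ∀ v, (T v).Finite := fun v =>
    (S.finite_toSet.prod (List.finite_length_lt ι S.card)).subset fun x hx => ⟨hx.1, hx.2.1⟩
  have hnil : ∀ v ∈ S, (v, []) ∈ T v := fun v hv => ⟨hv, Finset.card_pos.mpr ⟨v, hv⟩, rfl⟩
  have hmin : ∀ v ∈ S, ∃ n : ℕ,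
      (∃ x ∈ T v, walkWeight next w x.1 x.2 = ((-n : ℤ) : WithTop ℤ)) ∧
      ∀ y ∈ T v, ((-n : ℤ) : WithTop ℤ) ≤ walkWeight next w y.1 y.2 := by
    intro v hv
    obtain ⟨x, hx, hxmin⟩ := Set.exists_min_image (T v) (fun x => walkWeight next w x.1 x.2)
      (hfin v) ⟨_, hnil v hv⟩
    have hle : walkWeight next w x.1 x.2 ≤ 0 := hxmin _ (hnil v hv)
    obtain ⟨z, hz⟩ := WithTop.ne_top_iff_exists.mp (ne_top_of_le_ne_top WithTop.zero_ne_top hle)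
    rw [← hz] at hle hxmin
    have hz0 : z ≤ 0 := by exact_mod_cast hle
    refine ⟨(-z).toNat, ⟨x, hx, ?_⟩, ?_⟩ <;> rw [Int.toNat_of_nonneg (by omega), neg_neg]
    exacts [hz.symm, hxmin]
  choose! E hE using hmin
  refine ⟨E, fun v hv a => ?_⟩
  obtain ⟨x, ⟨hu, -, hend⟩, hx⟩ := (hE v hv).1
  obtain ⟨l', hl', hend', hle⟩ := exists_short_walk_le w hS hcyc hu (x.2 ++ [a])
  have key : ((-(E (next v a)) : ℤ) : WithTop ℤ) ≤ ((-(E v) : ℤ) : WithTop ℤ) + w v a :=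
    calc _ ≤ walkWeight next w x.1 l' :=
          (hE _ (hS v hv a)).2 (x.1, l') ⟨hu, hl', by rw [hend', walkEnd_append, hend]; rfl⟩
      _ ≤ _ := hle
      _ = _ := by rw [walkWeight_append, hend, hx]; simp [walkWeight]
  cases h : w v a with
  | top => simp
  | coe t =>
    rw [h] at key
    norm_cast at key ⊢
    omega

end Potential

lemma pow_pow_mod_eq {M : Type*} [Monoid M] {α : M} {k m : ℕ} (hα : α ^ k ^ m = α) (n : ℕ) :
    α ^ k ^ (n % m) = α ^ k ^ n := by
  have hper : Function.IsPeriodicPt (· ^ k) m α := by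
    simpa [Function.IsPeriodicPt, Function.IsFixedPt, pow_iterate] using hα
  simpa [pow_iterate] using hper.iterate_mod_apply n

section Clm

variable {K : Type*} [Field K] (k : ℕ) {n : ℕ} (c : Fin n → RatFunc K)

lemma clmList_cons (β : K) (a : Fin n) (l : List (Fin n)) :
    clmList k β c (a :: l) = vAt β (c a) + clmList k (β ^ k ^ (a.1 + 1)) c l := by
  unfold clmList
  change ∑ j : Fin (l.length + 1), vAt (β ^ k ^ abarList (a :: l) j) (c ((a :: l).get j)) = _
  rw [Fin.sum_univ_succ]
  refine congrArg₂ (· + ·) ?_ ?_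
  · simp [abarList]
  · refine Finset.sum_congr rfl fun j _ => ?_
    have hbar : abarList (a :: l) (j.succ.1) = (a.1 + 1) + abarList l j.1 := by
      simp [abarList]
    rw [hbar, pow_add, pow_mul]
    rfl

lemma walkEnd_pow (β : K) (l : List (Fin n)) :
    walkEnd (fun β (a : Fin n) => β ^ k ^ (a.1 + 1)) β l = β ^ k ^ barSum l := by
  induction l generalizing β with
  | nil => simp [walkEnd, barSum]
  | cons a l ih =>
    simp only [walkEnd, List.foldl_cons] at ih ⊢
    rw [ih, ← pow_mul, ← pow_add]
    simp [barSum]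

lemma walkWeight_eq_clmList (β : K) (l : List (Fin n)) :
    walkWeight (fun β (a : Fin n) => β ^ k ^ (a.1 + 1)) (fun β a => vAt β (c a)) β l =
      clmList k β c l := by
  induction l generalizing β with
  | nil => simp [walkWeight, clmList]
  | cons a l ih => rw [walkWeight, ih, clmList_cons]

end Clm

theorem stmt13_general {K : Type*} [Field K] (k : ℕ) (hk : 2 ≤ k)
    (α : K) (m : ℕ) (hmfix : α ^ k ^ m = α)
    (c : Fin m → RatFunc K)
    (hclm : ∀ i : ℕ, i < m → ∀ l : List (Fin m),
      α ^ k ^ (i + barSum l) = α ^ k ^ i → 0 ≤ clmList k (α ^ k ^ i) c l) :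
    ∃ h : Polynomial K, h ≠ 0 ∧
      ∀ (j : ℕ) (i : Fin m), 0 ≤ vAt (α ^ k ^ j) (act k (toRat h) c i) := by
  set orbit := (Finset.range m).image (α ^ k ^ ·)
  have hmem : ∀ j, 0 < m → α ^ k ^ j ∈ orbit := fun j hm =>
    pow_pow_mod_eq hmfix j ▸ Finset.mem_image_of_mem _ (Finset.mem_range.mpr (j.mod_lt hm))
  have hclosed : ∀ β ∈ orbit, ∀ a : Fin m, β ^ k ^ (a.1 + 1) ∈ orbit := by
    intro _ hβ a
    obtain ⟨i, -, rfl⟩ := Finset.mem_image.mp hβ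
    rw [← pow_mul, ← pow_add]
    exact hmem _ a.pos
  have hcyc : ∀ β ∈ orbit, ∀ l,
      walkEnd (fun β (a : Fin m) => β ^ k ^ (a.1 + 1)) β l = β →
      0 ≤ walkWeight (fun β (a : Fin m) => β ^ k ^ (a.1 + 1)) (fun β a => vAt β (c a)) β l := by
    intro _ hβ l hl
    obtain ⟨i, hi, rfl⟩ := Finset.mem_image.mp hβ
    rw [walkEnd_pow, ← pow_mul, ← pow_add] at hl
    rw [walkWeight_eq_clmList]
    exact hclm i (Finset.mem_range.mp hi) l hl
  obtain ⟨E, hE⟩ := exists_potential _ hclosed hcyc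
  obtain ⟨h, hh, hmult⟩ := exists_rootMultiplicity_eq orbit E
  refine ⟨h, hh, fun j i => vAt_act_nonneg (by omega) c i hh _ ?_⟩
  have hβ := hmem j i.pos
  rw [hmult _ hβ, hmult _ (hclosed _ hβ i)]
  exact hE _ hβ i

theorem stmt13 {K : Type*} [Field K] [IsAlgClosed K] (k : ℕ) (hk : 2 ≤ k)
    (hch : ∀ p : ℕ, p.Prime → CharP K p → ¬ p ∣ k)
    (α : K) (hα : IsAnxious k α) (hru : IsRootOfUnity α)
    (m : ℕ) (hm : 0 < m) (hmfix : α ^ k ^ m = α)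
    (hmin : ∀ m' : ℕ, 0 < m' → α ^ k ^ m' = α → m ≤ m')
    (c : Fin m → RatFunc K)
    (hclm : ∀ i : ℕ, i < m → ∀ l : List (Fin m),
      α ^ k ^ (i + barSum l) = α ^ k ^ i → 0 ≤ clmList k (α ^ k ^ i) c l) :
    ∃ h : Polynomial K, h ≠ 0 ∧
      ∀ (j : ℕ) (i : Fin m), 0 ≤ vAt (α ^ k ^ j) (act k (toRat h) c i) :=
  stmt13_general k hk α m hmfix c hclm
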